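/- Fix a real X > 1 and an integer n ≥ 1, and set q = 1 − (1 − 1/X)^{1/n}. Let v_1,…,v_n be i.i.d. random variables taking value X with probability q and value 1 with probability 1 − q. Then: (a) Pr[max_i v_i = X] = 1/X and E[max_i v_i] = 2 − 1/X; (b) for every posted price p ≥ 0, in the single-item posted-price sale where the item is sold to the first buyer in a fixed order with v_i ≥ p (and realized welfare W equal to the purchaser's value, W = 0 if no sale), E[W] ≤ 1 + X·q. -/

import Mathlib

open MeasureTheory Finset ProbabilityTheory

/-! The choice of `q` makes `(1 - q) ^ n = 1 - 1 / Xv`, so by independence the event that some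
buyer has value `Xv` (equivalently, that the maximum is `Xv`) has probability `1 / Xv`, and the
maximum, which is `1` or `Xv`, has mean `1 + (Xv - 1) / Xv`. A posted price `p ≤ 1` sells to the
first buyer, whose expected value is `1 + (Xv - 1) q`; a price `p > 1` sells only when some buyer
has value `Xv`, which yields at most `Xv · (1 / Xv) = 1`. -/

namespace Finset

lemma sup'_eq_iff_exists_of_forall_le {ι α : Type*} [LinearOrder α] {s : Finset ι}
    (H : s.Nonempty) {f : ι → α} {a : α} (h : ∀ i ∈ s, f i ≤ a) :
    s.sup' H f = a ↔ ∃ i ∈ s, f i = a := by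
  constructor
  · intro hsup
    obtain ⟨i, hi, hfi⟩ := exists_mem_eq_sup' H f
    exact ⟨i, hi, hfi ▸ hsup⟩
  · rintro ⟨i, hi, rfl⟩
    exact le_antisymm (sup'_le H f h) (le_sup' f hi)

end Finset

section PostedPrice

variable {ι : Type*} [Fintype ι] [LinearOrder ι]

noncomputable def postedPriceWelfare (p : ℝ) (v : ι → ℝ) : ℝ :=
  if h : (univ.filter fun i => p ≤ v i).Nonempty then
    v ((univ.filter fun i => p ≤ v i).min' h)
  else 0

lemma postedPriceWelfare_eq_zero_or_exists (p : ℝ) (v : ι → ℝ) :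
    postedPriceWelfare p v = 0 ∨ ∃ i, p ≤ v i ∧ postedPriceWelfare p v = v i := by
  unfold postedPriceWelfare
  split_ifs with h
  · exact Or.inr ⟨_, (mem_filter.1 (min'_mem _ h)).2, rfl⟩
  · exact Or.inl rfl

lemma postedPriceWelfare_nonneg {p : ℝ} (hp : 0 ≤ p) (v : ι → ℝ) :
    0 ≤ postedPriceWelfare p v := by
  rcases postedPriceWelfare_eq_zero_or_exists p v with h | ⟨i, hi, h⟩
  · exact h.ge
  · exact h ▸ hp.trans hi

lemma postedPriceWelfare_of_forall_le [Nonempty ι] {p : ℝ} {v : ι → ℝ} (h : ∀ i, p ≤ v i) :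
    postedPriceWelfare p v = v (univ.min' univ_nonempty) := by
  have hall : (univ.filter fun i => p ≤ v i) = univ := filter_true_of_mem fun i _ => h i
  simp only [postedPriceWelfare, hall, univ_nonempty, dite_true]

end PostedPrice

section TwoValued

variable {Ω : Type*} [MeasurableSpace Ω] {μ : Measure Ω} [IsProbabilityMeasure μ]
  {f : Ω → ℝ} {a b : ℝ}

lemma integral_eq_of_ae_eq_or (hf : Measurable f) (h : ∀ᵐ ω ∂μ, f ω = a ∨ f ω = b) :
    ∫ ω, f ω ∂μ = b + (a - b) * μ.real {ω | f ω = a} := by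
  set s := {ω | f ω = a}
  have hs : MeasurableSet s := hf (measurableSet_singleton a)
  have hf_eq : f =ᵐ[μ] fun ω => b + s.indicator (fun _ => a - b) ω := by
    filter_upwards [h] with ω hω
    by_cases ha : ω ∈ s
    · rw [Set.indicator_of_mem ha, ha.out]
      ring
    · rw [Set.indicator_of_notMem ha, hω.resolve_left ha, add_zero]
  rw [integral_congr_ae hf_eq, integral_add (integrable_const b)
      ((integrable_const _).indicator hs), integral_indicator_const _ hs, integral_const,
    probReal_univ, one_smul, smul_eq_mul, mul_comm]

lemma measureReal_eq_one_sub_of_ae_eq_or (hf : Measurable f) (hab : a ≠ b)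
    (h : ∀ᵐ ω ∂μ, f ω = a ∨ f ω = b) :
    μ.real {ω | f ω = b} = 1 - μ.real {ω | f ω = a} := by
  have hs : MeasurableSet {ω | f ω = a} := hf (measurableSet_singleton a)
  rw [← probReal_compl_eq_one_sub hs]
  refine measureReal_congr (Filter.eventuallyEq_set.2 ?_)
  filter_upwards [h] with ω hω
  rcases hω with hω | hω <;> simp [hω, hab, hab.symm]

end TwoValued

section Maximum

variable {Ω : Type*} [MeasurableSpace Ω] {μ : Measure Ω}
  {ι : Type*} [Fintype ι] [Nonempty ι] {X : ι → Ω → ℝ} {a b : ℝ}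

lemma ae_sup'_eq_or (hvals : ∀ i, ∀ᵐ ω ∂μ, X i ω = a ∨ X i ω = b) :
    ∀ᵐ ω ∂μ, (univ.sup' univ_nonempty fun i => X i ω) = a ∨
      (univ.sup' univ_nonempty fun i => X i ω) = b := by
  filter_upwards [ae_all_iff.2 hvals] with ω hω
  obtain ⟨i, -, hi⟩ := exists_mem_eq_sup' univ_nonempty fun i => X i ω
  exact hi ▸ hω i

lemma measureReal_sup'_eq [IsProbabilityMeasure μ] (hmeas : ∀ i, Measurable (X i))
    (hindep : iIndepFun X μ) (hba : b < a) (hvals : ∀ i, ∀ᵐ ω ∂μ, X i ω = a ∨ X i ω = b) :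
    μ.real {ω | (univ.sup' univ_nonempty fun i => X i ω) = a} =
      1 - ∏ i, (1 - μ.real {ω | X i ω = a}) := by
  have hlow (i : ι) : μ.real {ω | X i ω = b} = 1 - μ.real {ω | X i ω = a} :=
    measureReal_eq_one_sub_of_ae_eq_or (hmeas i) hba.ne' (hvals i)
  have hall_low : μ.real (⋂ i, {ω | X i ω = b}) = ∏ i, μ.real {ω | X i ω = b} := by
    rw [measureReal_def, hindep.meas_iInter (s := fun i => {ω | X i ω = b})
      fun i => ⟨{b}, measurableSet_singleton b, rfl⟩, ENNReal.toReal_prod]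
    rfl
  have hevent : {ω | (univ.sup' univ_nonempty fun i => X i ω) = a} =ᵐ[μ]
      ((⋂ i, {ω | X i ω = b})ᶜ : Set Ω) := by
    refine Filter.eventuallyEq_set.2 ?_
    filter_upwards [ae_all_iff.2 hvals] with ω hω
    have hle (i : ι) (_ : i ∈ univ) : X i ω ≤ a := by rcases hω i with h | h <;> linarith
    simp only [sup'_eq_iff_exists_of_forall_le _ hle, mem_univ, true_and]
    simp only [Set.mem_compl_iff, Set.mem_iInter, not_forall]
    refine exists_congr fun i => ?_
    rcases hω i with h | h <;> simp [h, hba.ne, hba.ne']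
  have hlow_meas : MeasurableSet (⋂ i, {ω | X i ω = b}) :=
    .iInter fun i => hmeas i (measurableSet_singleton b)
  rw [measureReal_congr hevent, probReal_compl_eq_one_sub hlow_meas, hall_low]
  simp only [hlow]

end Maximum

section ExpectedWelfare

variable {Ω : Type*} [MeasurableSpace Ω] {μ : Measure Ω}
  {ι : Type*} [Fintype ι] [LinearOrder ι] [Nonempty ι] {X : ι → Ω → ℝ} {p : ℝ}

lemma integral_postedPriceWelfare_of_ae_le (h : ∀ i, ∀ᵐ ω ∂μ, p ≤ X i ω) :
    ∫ ω, postedPriceWelfare p (fun i => X i ω) ∂μ =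
      ∫ ω, X (univ.min' univ_nonempty) ω ∂μ := by
  refine integral_congr_ae ?_
  filter_upwards [ae_all_iff.2 h] with ω hω
  exact postedPriceWelfare_of_forall_le hω

lemma integral_postedPriceWelfare_le_of_lt [IsFiniteMeasure μ] {a b : ℝ} (hp : 0 ≤ p)
    (hbp : b < p) (hba : b < a) (ha : 0 ≤ a) (hmeas : ∀ i, Measurable (X i))
    (hvals : ∀ i, ∀ᵐ ω ∂μ, X i ω = a ∨ X i ω = b) :
    ∫ ω, postedPriceWelfare p (fun i => X i ω) ∂μ ≤
      a * μ.real {ω | (univ.sup' univ_nonempty fun i => X i ω) = a} := by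
  set A := {ω | (univ.sup' univ_nonempty fun i => X i ω) = a}
  have hA : MeasurableSet A := (by fun_prop : Measurable fun ω =>
    univ.sup' univ_nonempty fun i => X i ω) (measurableSet_singleton a)
  have hbound :
      ∀ᵐ ω ∂μ, postedPriceWelfare p (fun i => X i ω) ≤ A.indicator (fun _ => a) ω := by
    filter_upwards [ae_all_iff.2 hvals] with ω hω
    rcases postedPriceWelfare_eq_zero_or_exists p (fun i => X i ω) with h | ⟨i, hpi, h⟩
    · exact h ▸ Set.indicator_nonneg (fun _ _ => ha) ω
    · have hXi : X i ω = a := (hω i).resolve_right fun h' => by linarith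
      have hle (j : ι) (_ : j ∈ univ) : X j ω ≤ a := by rcases hω j with hj | hj <;> linarith
      have hωA : ω ∈ A := (sup'_eq_iff_exists_of_forall_le _ hle).2 ⟨i, mem_univ i, hXi⟩
      rw [h, Set.indicator_of_mem hωA, hXi]
  calc ∫ ω, postedPriceWelfare p (fun i => X i ω) ∂μ ≤ ∫ ω, A.indicator (fun _ => a) ω ∂μ :=
        integral_mono_of_nonneg (.of_forall fun ω => postedPriceWelfare_nonneg hp _)
          ((integrable_const a).indicator hA) hbound
    _ = a * μ.real A := by rw [integral_indicator_const _ hA, smul_eq_mul, mul_comm]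

end ExpectedWelfare

/-- tightness example for a single item. With `Xv > 1`,
`n ≥ 1` and `q = 1 − (1 − 1/Xv)^{1/n}`, let `v_1,…,v_n` be i.i.d., equal to
`Xv` with probability `q` and to `1` otherwise. Then
(a) `Pr[max_i v_i = Xv] = 1/Xv` and `E[max_i v_i] = 2 − 1/Xv`; and
(b) for every posted price `p ≥ 0`, selling to the first buyer whose value is
at least `p` yields expected welfare at most `1 + Xv·q`. -/
theorem single_item_posted_price_tight
    {Ω : Type*} [MeasurableSpace Ω] (μ : Measure Ω) [IsProbabilityMeasure μ]
    {n : ℕ} [NeZero n]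
    (Xv : ℝ) (hXv : 1 < Xv)
    (q : ℝ) (hq : q = 1 - (1 - 1 / Xv) ^ ((n : ℝ)⁻¹))
    (X : Fin n → Ω → ℝ)
    (hmeas : ∀ i, Measurable (X i))
    (hindep : ProbabilityTheory.iIndepFun X μ)
    (hvals : ∀ i, ∀ᵐ ω ∂μ, X i ω = Xv ∨ X i ω = 1)
    (hprob : ∀ i, μ {ω | X i ω = Xv} = ENNReal.ofReal q) :
    (μ {ω | (Finset.univ.sup' Finset.univ_nonempty fun i => X i ω) = Xv} =
        ENNReal.ofReal (1 / Xv) ∧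
      ∫ ω, (Finset.univ.sup' Finset.univ_nonempty fun i => X i ω) ∂μ =
        2 - 1 / Xv) ∧
    ∀ p : ℝ, 0 ≤ p →
      ∫ ω,
          (if h : (Finset.univ.filter fun i => p ≤ X i ω).Nonempty
            then X ((Finset.univ.filter fun i => p ≤ X i ω).min' h) ω
            else 0) ∂μ ≤
        1 + Xv * q := by
  have hXv_pos : 0 < Xv := one_pos.trans hXv
  have hbase : 0 ≤ 1 - 1 / Xv := sub_nonneg.2 ((div_le_one hXv_pos).2 hXv.le)
  have hq_nonneg : 0 ≤ q := hq ▸ sub_nonneg.2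
    (Real.rpow_le_one hbase (by linarith [one_div_pos.2 hXv_pos]) (by positivity))
  have hpow : (1 - q) ^ n = 1 - 1 / Xv := by
    rw [hq, sub_sub_cancel, Real.rpow_inv_natCast_pow hbase (NeZero.ne n)]
  have hXq (i : Fin n) : μ.real {ω | X i ω = Xv} = q := by
    rw [measureReal_def, hprob i, ENNReal.toReal_ofReal hq_nonneg]
  have hmax : μ.real {ω | (univ.sup' univ_nonempty fun i => X i ω) = Xv} = 1 / Xv := by
    rw [measureReal_sup'_eq hmeas hindep hXv hvals]
    simp only [hXq, prod_const, card_univ, Fintype.card_fin, hpow, sub_sub_cancel]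
  refine ⟨⟨?_, ?_⟩, fun p hp => ?_⟩
  · rw [← ofReal_measureReal, hmax]
  · rw [integral_eq_of_ae_eq_or (by fun_prop) (ae_sup'_eq_or hvals), hmax]
    field_simp
    ring
  · change ∫ ω, postedPriceWelfare p (fun i => X i ω) ∂μ ≤ 1 + Xv * q
    rcases le_or_gt p 1 with hp1 | hp1
    · have hfirst : ∀ i, ∀ᵐ ω ∂μ, p ≤ X i ω := fun i => (hvals i).mono fun ω h => by
        rcases h with h | h <;> linarith
      rw [integral_postedPriceWelfare_of_ae_le hfirst,
        integral_eq_of_ae_eq_or (hmeas _) (hvals _), hXq]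
      nlinarith
    · calc _ ≤ Xv * (1 / Xv) :=
            hmax ▸ integral_postedPriceWelfare_le_of_lt hp hp1 hXv hXv_pos.le hmeas hvals
        _ ≤ 1 + Xv * q := by rw [mul_one_div_cancel hXv_pos.ne']; nlinarith
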